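/- Let f belong to F_n(C,ε) on (ℝ^d)^n with n ≥ 1, and set E₁ = (ℝ^d)^{n−1}, E₂ = ℝ^d. Then the partial symmetrisation S₂f (in the last ℝ^d coordinate) also belongs to F_n(C,ε). -/

import Mathlib

open MeasureTheory Real

/-- The class `F(C,ε)`: functions that are `Cε`-Lipschitz and satisfy
`f(x+h) + f(x-h) - 2f(x) ≤ Cε²|h|²` for all `x, h`. -/
def memF {E : Type*} [NormedAddCommGroup E] (C ε : ℝ) (f : E → ℝ) : Prop :=
  LipschitzWith (C * ε).toNNReal f ∧
    ∀ x h : E, f (x + h) + f (x - h) - 2 * f x ≤ C * ε ^ 2 * ‖h‖ ^ 2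

/-- The class `F_n(C,ε)` of functions on `(ℝ^d)^n`: functions belonging to `F(C,ε)`
with respect to each `ℝ^d`-coordinate block separately. -/
def memFn {d n : ℕ} (C ε : ℝ) (f : (Fin n → EuclideanSpace ℝ (Fin d)) → ℝ) : Prop :=
  ∀ (i : Fin n) (x : Fin n → EuclideanSpace ℝ (Fin d)),
    memF C ε fun y => f (Function.update x i y)

/-- The partial symmetrisation in the last `ℝ^d`-coordinate:
`S₂f(x,y) = inf_u ( ½(f(x, u+y) + f(x, u−y)) + ½|u|² )`. -/
noncomputable def Slast {d n : ℕ} (f : (Fin (n + 1) → EuclideanSpace ℝ (Fin d)) → ℝ)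
    (x : Fin (n + 1) → EuclideanSpace ℝ (Fin d)) : ℝ :=
  ⨅ u : EuclideanSpace ℝ (Fin d),
    ((f (Function.update x (Fin.last n) (u + x (Fin.last n))) +
        f (Function.update x (Fin.last n) (u - x (Fin.last n)))) / 2 + ‖u‖ ^ 2 / 2)

/-!
For each `u`, the function `y ↦ ½(f(x, u + y) + f(x, u − y)) + ½|u|²` lies in `F(C,ε)` in every
coordinate block: in the last block because `F(C,ε)` is invariant under `y ↦ u ± y` and under
averaging, in the other blocks because it is an average of sections of `f`. The class `F(C,ε)` is
stable under pointwise infima, and the infimum over `u` is finite because the Lipschitz bound on `f`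
is beaten by the quadratic term `½|u|²`.
-/

open Function Set

namespace memF

variable {E : Type*} [NormedAddCommGroup E] {C ε : ℝ}

lemma comp_add_left {g : E → ℝ} (hg : memF C ε g) (u : E) :
    memF C ε fun y => g (u + y) := by
  refine ⟨LipschitzWith.of_le_add_mul _ fun a b => ?_, fun y h => ?_⟩
  · simpa only [dist_add_left] using hg.1.le_add_mul (u + a) (u + b)
  · simpa only [add_assoc, add_sub_assoc] using hg.2 (u + y) h

lemma comp_sub_left {g : E → ℝ} (hg : memF C ε g) (u : E) :
    memF C ε fun y => g (u - y) := by
  refine ⟨LipschitzWith.of_le_add_mul _ fun a b => ?_, fun y h => ?_⟩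
  · simpa only [dist_sub_left] using hg.1.le_add_mul (u - a) (u - b)
  · simp only [sub_add_eq_sub_sub, ← sub_add]
    linarith [hg.2 (u - y) h]

lemma avg_add_const {g₁ g₂ : E → ℝ} (hg₁ : memF C ε g₁)
    (hg₂ : memF C ε g₂) (c : ℝ) : memF C ε fun y => (g₁ y + g₂ y) / 2 + c := by
  refine ⟨LipschitzWith.of_le_add_mul _ fun a b => ?_, fun y h => ?_⟩
  · linarith [hg₁.1.le_add_mul a b, hg₂.1.le_add_mul a b]
  · linarith [hg₁.2 y h, hg₂.2 y h]

lemma ciInf {ι : Type*} [Nonempty ι] {Φ : ι → E → ℝ}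
    (hΦ : ∀ u, memF C ε (Φ u)) (hb : ∀ y, BddBelow (range fun u => Φ u y)) :
    memF C ε fun y => ⨅ u, Φ u y := by
  refine ⟨LipschitzWith.of_le_add_mul _ fun a b => ?_, fun y h => ?_⟩
  · rw [← sub_le_iff_le_add]
    refine le_ciInf fun u => ?_
    linarith [ciInf_le (hb a) u, (hΦ u).1.le_add_mul a b]
  · suffices ((⨅ u, Φ u (y + h)) + (⨅ u, Φ u (y - h)) - C * ε ^ 2 * ‖h‖ ^ 2) / 2 ≤
        ⨅ u, Φ u y by linarith
    refine le_ciInf fun u => ?_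
    linarith [ciInf_le (hb (y + h)) u, ciInf_le (hb (y - h)) u, (hΦ u).2 y h]

end memF

/-- The bound is `K|u| ≤ ½|u|² + ½K²`. -/
lemma bddBelow_range_avg_add_sq_norm {E : Type*} [NormedAddCommGroup E] {K : NNReal}
    {g : E → ℝ} (hg : LipschitzWith K g) (c : E) :
    BddBelow (range fun u => (g (u + c) + g (u - c)) / 2 + ‖u‖ ^ 2 / 2) := by
  refine ⟨(g c + g (-c)) / 2 - (K : ℝ) ^ 2 / 2, ?_⟩
  rintro _ ⟨u, rfl⟩
  have h₁ := hg.le_add_mul c (u + c)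
  have h₂ := hg.le_add_mul (-c) (u - c)
  rw [dist_comm, dist_add_self_left] at h₁
  rw [dist_comm, sub_eq_add_neg u c, dist_add_self_left, ← sub_eq_add_neg] at h₂
  nlinarith [sq_nonneg (‖u‖ - K)]

theorem Slast_memFn_general {d n : ℕ} (C ε : ℝ)
    (f : (Fin (n + 1) → EuclideanSpace ℝ (Fin d)) → ℝ)
    (hf : memFn C ε f) : memFn C ε (Slast f) := by
  intro i x
  refine memF.ciInf (fun u => ?_) fun y =>
    bddBelow_range_avg_add_sq_norm (hf (Fin.last n) (update x i y)).1 _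
  by_cases hi : i = Fin.last n
  · subst hi
    simpa only [update_idem, update_self] using
      ((hf _ x).comp_add_left u).avg_add_const ((hf _ x).comp_sub_left u) (‖u‖ ^ 2 / 2)
  · simp only [update_of_ne (Ne.symm hi), update_comm hi]
    exact (hf i _).avg_add_const (hf i _) _

/-- The class `F_n(C,ε)` is stable under partial symmetrisation in the last
coordinate: if `f ∈ F_n(C,ε)` then `S₂f ∈ F_n(C,ε)`. -/
theorem Slast_memFn {d n : ℕ} (C ε : ℝ) (hC : 0 < C) (hε : ε ∈ Set.Ioc (0 : ℝ) 1)
    (f : (Fin (n + 1) → EuclideanSpace ℝ (Fin d)) → ℝ)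
    (hf : memFn C ε f) : memFn C ε (Slast f) :=
  Slast_memFn_general C ε f hf
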